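/- Let ε ∈ (0, 1/2), σ_w² > 0, 0 ≤ P_min < P_max, p_j ∈ [0,1], and P_a > 0 be reals, and let μ = (1−p_j)·δ_{σ_w²} + p_j·Unif[σ_w² + P_min, σ_w² + P_max]. Then the covertness constraint ξ* ≥ 1 − ε, where ξ* = 1 − sup_{γ∈ℝ} μ([γ − P_a, γ)), holds if and only if all three of the following hold: p_j ≥ 1 − ε, P_max − P_min ≥ (p_j/ε)·P_a, and (p_j/(1−ε) − 1)·P_max + P_min ≥ (p_j/(1−ε))·P_a. -/

import Mathlib

open MeasureTheory Set

/-!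
The mass of the window `[γ - Pa, γ)` is `(1 - pj)` if it contains the noise level `σw`, plus
`pj / (Pmax - Pmin)` times its overlap with the jammer's support `[σw + Pmin, σw + Pmax]`.
A window containing `σw` overlaps the support in at most `[σw + Pmin, σw + min Pa Pmax]`, so
`[σw, σw + Pa)` is the heaviest such window; any other window overlaps in length at most
`min Pa (Pmax - Pmin)`, attained by a window starting at the left end of the support. The
constraint is therefore equivalent to both peak masses being at most `ε`, which unpacks to the
three conditions. In the second peak `ε < 1/2 < 1 - ε ≤ pj` rules out `Pa > Pmax - Pmin`.
-/

theorem ENNReal.ofReal_one_sub_le_one_sub_iff {ε : ℝ} (hε0 : 0 ≤ ε) (hε1 : ε < 1)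
    (s : ENNReal) : ENNReal.ofReal (1 - ε) ≤ 1 - s ↔ s ≤ ENNReal.ofReal ε := by
  rw [ENNReal.ofReal_sub _ hε0, ENNReal.ofReal_one]
  rcases le_total s 1 with hs | hs
  · exact ENNReal.sub_le_sub_iff_left hs ENNReal.one_ne_top
  · have hpos : ENNReal.ofReal ε < 1 := ENNReal.ofReal_lt_one.2 hε1
    simp only [tsub_eq_zero_of_le hs, nonpos_iff_eq_zero, tsub_eq_zero_iff_le]
    exact ⟨fun h => (not_le.2 hpos h).elim, fun h => (not_le.2 hpos (hs.trans h)).elim⟩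

theorem Real.volume_Ico_inter_Icc (a b c d : ℝ) :
    volume (Ico a b ∩ Icc c d) = ENNReal.ofReal (min b d - max a c) := by
  apply le_antisymm
  · calc volume (Ico a b ∩ Icc c d) ≤ volume (Icc (max a c) (min b d)) :=
          measure_mono fun x ⟨⟨hax, hxb⟩, hcx, hxd⟩ =>
            ⟨max_le hax hcx, le_min hxb.le hxd⟩
      _ = _ := Real.volume_Icc
  · calc ENNReal.ofReal (min b d - max a c) = volume (Ico (max a c) (min b d)) :=
          Real.volume_Ico.symm
      _ ≤ _ := measure_mono fun x hx => by
        simp only [mem_Ico, max_le_iff, lt_min_iff] at hx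
        exact ⟨⟨hx.1.1, hx.2.1⟩, hx.1.2, hx.2.2.le⟩

noncomputable def nullPowerMeasure (σw Pmin Pmax pj : ℝ) : Measure ℝ :=
  ENNReal.ofReal (1 - pj) • Measure.dirac σw
    + ENNReal.ofReal pj •
      ((ENNReal.ofReal (Pmax - Pmin))⁻¹ • volume.restrict (Icc (σw + Pmin) (σw + Pmax)))

noncomputable def windowMass (σw Pmin Pmax pj Pa γ : ℝ) : ℝ :=
  (1 - pj) * (Ico (γ - Pa) γ).indicator 1 σw
    + pj * max 0 (min γ (σw + Pmax) - max (γ - Pa) (σw + Pmin)) / (Pmax - Pmin)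

theorem nullPowerMeasure_Ico {σw Pmin Pmax pj : ℝ} (hlt : Pmin < Pmax)
    (hpj0 : 0 ≤ pj) (hpj1 : pj ≤ 1) (Pa γ : ℝ) :
    nullPowerMeasure σw Pmin Pmax pj (Ico (γ - Pa) γ)
      = ENNReal.ofReal (windowMass σw Pmin Pmax pj Pa γ) := by
  have hL : 0 < Pmax - Pmin := sub_pos.2 hlt
  have hdirac : Measure.dirac σw (Ico (γ - Pa) γ)
      = ENNReal.ofReal ((Ico (γ - Pa) γ).indicator 1 σw) := by
    rw [Measure.dirac_apply' _ measurableSet_Ico]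
    by_cases h : σw ∈ Ico (γ - Pa) γ <;> simp [h]
  have hdirac_nonneg : 0 ≤ (1 - pj) * (Ico (γ - Pa) γ).indicator 1 σw :=
    mul_nonneg (by linarith) (indicator_nonneg (fun _ _ => zero_le_one) _)
  simp only [nullPowerMeasure, windowMass, Measure.add_apply, Measure.smul_apply, smul_eq_mul,
    Measure.restrict_apply measurableSet_Ico, Real.volume_Ico_inter_Icc, hdirac]
  rw [ENNReal.ofReal_add hdirac_nonneg (by positivity), ENNReal.ofReal_mul (by linarith),
    ENNReal.ofReal_div_of_pos hL, ENNReal.ofReal_mul hpj0, ENNReal.ofReal_max, ENNReal.ofReal_zero,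
    max_eq_right zero_le, div_eq_mul_inv, mul_assoc, mul_comm (ENNReal.ofReal (Pmax - Pmin))⁻¹]

section windowMass

variable {σw Pmin Pmax pj Pa γ : ℝ}

theorem windowMass_le_of_mem (hlt : Pmin < Pmax) (hpj0 : 0 ≤ pj)
    (h : σw ∈ Ico (γ - Pa) γ) :
    windowMass σw Pmin Pmax pj Pa γ
      ≤ 1 - pj + pj * max 0 (min Pa Pmax - Pmin) / (Pmax - Pmin) := by
  have hL : 0 < Pmax - Pmin := sub_pos.2 hlt
  have hoverlap : min γ (σw + Pmax) - max (γ - Pa) (σw + Pmin) ≤ min Pa Pmax - Pmin := by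
    have := h.1
    have := le_max_right (γ - Pa) (σw + Pmin)
    have := min_le_min_right (σw + Pmax) (show γ ≤ σw + Pa by linarith)
    rw [min_add_add_left] at this
    linarith
  rw [windowMass, indicator_of_mem h, Pi.one_apply, mul_one]
  gcongr

theorem windowMass_le_of_notMem (hlt : Pmin < Pmax) (hpj0 : 0 ≤ pj) (hPa : 0 ≤ Pa)
    (h : σw ∉ Ico (γ - Pa) γ) :
    windowMass σw Pmin Pmax pj Pa γ ≤ pj * min Pa (Pmax - Pmin) / (Pmax - Pmin) := by
  have hL : 0 < Pmax - Pmin := sub_pos.2 hlt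
  have hoverlap : min γ (σw + Pmax) - max (γ - Pa) (σw + Pmin) ≤ min Pa (Pmax - Pmin) := by
    have := min_le_left γ (σw + Pmax)
    have := min_le_right γ (σw + Pmax)
    have := le_max_left (γ - Pa) (σw + Pmin)
    have := le_max_right (γ - Pa) (σw + Pmin)
    exact le_min (by linarith) (by linarith)
  rw [windowMass, indicator_of_notMem h, mul_zero, zero_add]
  gcongr
  exact max_le (le_min hPa hL.le) hoverlap

theorem windowMass_add_self (hPmin : 0 ≤ Pmin) (hPa : 0 < Pa) :
    windowMass σw Pmin Pmax pj Pa (σw + Pa)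
      = 1 - pj + pj * max 0 (min Pa Pmax - Pmin) / (Pmax - Pmin) := by
  have hmem : σw ∈ Ico (σw + Pa - Pa) (σw + Pa) := ⟨by linarith, by linarith⟩
  have hoverlap : min (σw + Pa) (σw + Pmax) - max (σw + Pa - Pa) (σw + Pmin)
      = min Pa Pmax - Pmin := by
    rw [min_add_add_left, add_sub_cancel_right, max_eq_right (by linarith)]
    ring
  rw [windowMass, indicator_of_mem hmem, Pi.one_apply, mul_one, hoverlap]

theorem le_windowMass_add_min (hlt : Pmin < Pmax) (hpj1 : pj ≤ 1) (hPa : 0 ≤ Pa) :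
    pj * min Pa (Pmax - Pmin) / (Pmax - Pmin)
      ≤ windowMass σw Pmin Pmax pj Pa (σw + Pmin + min Pa (Pmax - Pmin)) := by
  set m := min Pa (Pmax - Pmin)
  have hm0 : 0 ≤ m := le_min hPa (sub_pos.2 hlt).le
  have hoverlap : min (σw + Pmin + m) (σw + Pmax) - max (σw + Pmin + m - Pa) (σw + Pmin) = m := by
    rw [min_eq_left (by linarith [min_le_right Pa (Pmax - Pmin)]),
      max_eq_right (by linarith [min_le_left Pa (Pmax - Pmin)])]
    ring
  rw [windowMass, hoverlap, max_eq_right hm0]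
  exact le_add_of_nonneg_left <|
    mul_nonneg (by linarith) (indicator_nonneg (fun _ _ => zero_le_one) _)

theorem forall_windowMass_le_iff (hPmin : 0 ≤ Pmin) (hlt : Pmin < Pmax) (hpj0 : 0 ≤ pj)
    (hpj1 : pj ≤ 1) (hPa : 0 < Pa) (ε : ℝ) :
    (∀ γ, windowMass σw Pmin Pmax pj Pa γ ≤ ε)
      ↔ 1 - pj + pj * max 0 (min Pa Pmax - Pmin) / (Pmax - Pmin) ≤ ε
        ∧ pj * min Pa (Pmax - Pmin) / (Pmax - Pmin) ≤ ε := by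
  refine ⟨fun h => ⟨?_, ?_⟩, fun ⟨hdirac, hjam⟩ γ => ?_⟩
  · exact windowMass_add_self hPmin hPa ▸ h (σw + Pa)
  · exact (le_windowMass_add_min hlt hpj1 hPa.le).trans (h _)
  · by_cases hmem : σw ∈ Ico (γ - Pa) γ
    · exact (windowMass_le_of_mem hlt hpj0 hmem).trans hdirac
    · exact (windowMass_le_of_notMem hlt hpj0 hPa.le hmem).trans hjam

end windowMass

section peaks

variable {ε Pmin Pmax pj Pa : ℝ}

theorem dirac_peak_le_iff (hε1 : ε < 1) (hlt : Pmin < Pmax) (hpj0 : 0 ≤ pj) :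
    1 - pj + pj * max 0 (min Pa Pmax - Pmin) / (Pmax - Pmin) ≤ ε
      ↔ 1 - ε ≤ pj ∧ (1 - ε) * (Pmax - Pmin) ≤ pj * (Pmax - Pa) := by
  have hL : 0 < Pmax - Pmin := sub_pos.2 hlt
  rw [← le_sub_iff_add_le', div_le_iff₀ hL]
  rcases le_or_gt Pa Pmin with hPa | hPa
  · rw [max_eq_left (by linarith [min_le_left Pa Pmax])]
    constructor
    · intro h
      have : 1 - ε ≤ pj := by nlinarith
      exact ⟨this, by nlinarith⟩
    · rintro ⟨h, -⟩
      nlinarith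
  rcases le_or_gt Pa Pmax with hPa' | hPa'
  · rw [min_eq_left hPa', max_eq_right (by linarith)]
    constructor
    · intro h
      exact ⟨by nlinarith, by nlinarith⟩
    · rintro ⟨-, h⟩
      nlinarith
  · rw [min_eq_right hPa'.le, max_eq_right hL.le]
    constructor
    · intro h
      nlinarith
    · rintro ⟨-, h⟩
      nlinarith

theorem jam_peak_le_iff (hε : ε < 1 / 2) (hpj : 1 - ε ≤ pj) (hlt : Pmin < Pmax) :
    pj * min Pa (Pmax - Pmin) / (Pmax - Pmin) ≤ ε ↔ pj * Pa ≤ ε * (Pmax - Pmin) := by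
  have hL : 0 < Pmax - Pmin := sub_pos.2 hlt
  rw [div_le_iff₀ hL]
  rcases le_or_gt Pa (Pmax - Pmin) with hPa | hPa
  · rw [min_eq_left hPa]
  · rw [min_eq_right hPa.le]
    constructor <;> intro h <;> nlinarith

theorem peaks_le_iff (hε0 : 0 < ε) (hε1 : ε < 1 / 2) (hlt : Pmin < Pmax) (hpj0 : 0 ≤ pj) :
    (1 - pj + pj * max 0 (min Pa Pmax - Pmin) / (Pmax - Pmin) ≤ ε
        ∧ pj * min Pa (Pmax - Pmin) / (Pmax - Pmin) ≤ ε)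
      ↔ 1 - ε ≤ pj ∧ pj / ε * Pa ≤ Pmax - Pmin
        ∧ pj / (1 - ε) * Pa ≤ (pj / (1 - ε) - 1) * Pmax + Pmin := by
  have h1ε : 0 < 1 - ε := by linarith
  have hjammer : pj / ε * Pa ≤ Pmax - Pmin ↔ pj * Pa ≤ ε * (Pmax - Pmin) := by
    rw [div_mul_eq_mul_div, div_le_iff₀ hε0, mul_comm ε]
  have hdirac : pj / (1 - ε) * Pa ≤ (pj / (1 - ε) - 1) * Pmax + Pmin
      ↔ (1 - ε) * (Pmax - Pmin) ≤ pj * (Pmax - Pa) := by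
    have : (pj / (1 - ε) - 1) * Pmax + Pmin - pj / (1 - ε) * Pa
        = (pj * (Pmax - Pa) - (1 - ε) * (Pmax - Pmin)) / (1 - ε) := by
      field_simp
      ring
    rw [← sub_nonneg, this, le_div_iff₀ h1ε, zero_mul, sub_nonneg]
  rw [dirac_peak_le_iff (by linarith) hlt hpj0, hjammer, hdirac]
  constructor
  · rintro ⟨⟨hpj, h3⟩, h2⟩
    exact ⟨hpj, (jam_peak_le_iff hε1 hpj hlt).1 h2, h3⟩
  · rintro ⟨hpj, h2, h3⟩
    exact ⟨⟨hpj, h3⟩, (jam_peak_le_iff hε1 hpj hlt).2 h2⟩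

end peaks

theorem covertness_constraint_iff_general
    (ε σw Pmin Pmax pj Pa : ℝ)
    (hε0 : 0 < ε) (hε1 : ε < 1/2)
    (hPmin : 0 ≤ Pmin) (hlt : Pmin < Pmax)
    (hpj0 : 0 ≤ pj) (hpj1 : pj ≤ 1) (hPa : 0 < Pa)
    (μ : Measure ℝ)
    (hμ : μ = ENNReal.ofReal (1 - pj) • Measure.dirac σw
        + ENNReal.ofReal pj •
          ((ENNReal.ofReal (Pmax - Pmin))⁻¹ •
            volume.restrict (Icc (σw + Pmin) (σw + Pmax)))) :
    (ENNReal.ofReal (1 - ε) ≤ 1 - ⨆ γ : ℝ, μ (Ico (γ - Pa) γ)) ↔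
      (1 - ε ≤ pj ∧
        pj / ε * Pa ≤ Pmax - Pmin ∧
        pj / (1 - ε) * Pa ≤ (pj / (1 - ε) - 1) * Pmax + Pmin) := by
  have hμ' : μ = nullPowerMeasure σw Pmin Pmax pj := hμ
  have hsup : (⨆ γ : ℝ, μ (Ico (γ - Pa) γ)) ≤ ENNReal.ofReal ε
      ↔ ∀ γ, windowMass σw Pmin Pmax pj Pa γ ≤ ε := by
    simp only [iSup_le_iff, hμ', nullPowerMeasure_Ico hlt hpj0 hpj1,
      ENNReal.ofReal_le_ofReal_iff hε0.le]
  rw [ENNReal.ofReal_one_sub_le_one_sub_iff hε0.le (by linarith), hsup,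
    forall_windowMass_le_iff hPmin hlt hpj0 hpj1 hPa, peaks_le_iff hε0 hε1 hlt hpj0]

theorem covertness_constraint_iff
    (ε σw Pmin Pmax pj Pa : ℝ)
    (hε0 : 0 < ε) (hε1 : ε < 1/2)
    (hσw : 0 < σw) (hPmin : 0 ≤ Pmin) (hlt : Pmin < Pmax)
    (hpj0 : 0 ≤ pj) (hpj1 : pj ≤ 1) (hPa : 0 < Pa)
    (μ : Measure ℝ)
    (hμ : μ = ENNReal.ofReal (1 - pj) • Measure.dirac σw
        + ENNReal.ofReal pj •
          ((ENNReal.ofReal (Pmax - Pmin))⁻¹ •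
            volume.restrict (Icc (σw + Pmin) (σw + Pmax)))) :
    (ENNReal.ofReal (1 - ε) ≤ 1 - ⨆ γ : ℝ, μ (Ico (γ - Pa) γ)) ↔
      (1 - ε ≤ pj ∧
        pj / ε * Pa ≤ Pmax - Pmin ∧
        pj / (1 - ε) * Pa ≤ (pj / (1 - ε) - 1) * Pmax + Pmin) :=
  covertness_constraint_iff_general ε σw Pmin Pmax pj Pa hε0 hε1 hPmin hlt hpj0 hpj1 hPa μ hμ
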